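/- arXiv:1006.0518 — 3 statements merged into one kernel-verified Lean document; each statement's English description precedes it below -/
import Mathlib

section
/- For every integer m, the coefficients of Q_{p,q,r} satisfy |a_m − a_{m−qr}| ≤ 2; by the symmetry of the parameters, the same bound holds with qr replaced by rp or by pq. -/
open Polynomial
open scoped Classical

/-- The defining identity of the ternary inclusion-exclusion polynomial `Q_{p,q,r}`:
`Q·(z^{qr}-1)(z^{rp}-1)(z^{pq}-1)(z-1) = (z^{pqr}-1)(z^r-1)(z^q-1)(z^p-1)`. -/
def ternaryId (p q r : ℕ) (Q : Polynomial ℤ) : Prop :=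
  Q * (((X : Polynomial ℤ) ^ (q * r) - 1) * ((X : Polynomial ℤ) ^ (r * p) - 1) *
      ((X : Polynomial ℤ) ^ (p * q) - 1) * ((X : Polynomial ℤ) - 1)) =
    ((X : Polynomial ℤ) ^ (p * q * r) - 1) * ((X : Polynomial ℤ) ^ r - 1) *
      ((X : Polynomial ℤ) ^ q - 1) * ((X : Polynomial ℤ) ^ p - 1)

/-- The coefficient `a_m` of `z^m` in `Q`, indexed by `m : ℤ`, with the convention
that `a_m = 0` for `m < 0` (and automatically `a_m = 0` for `m` beyond the degree). -/
def aCoeff (Q : Polynomial ℤ) (m : ℤ) : ℤ :=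
  if 0 ≤ m then Q.coeff m.toNat else 0

/-- The characteristic function `χ` of integers representable as
`i·qr + j·rp + k·pq` with integers `i, j, k ≥ 0`. -/
noncomputable def chi (p q r : ℕ) (n : ℤ) : ℤ :=
  if ∃ i j k : ℕ, n = (i * (q * r) + j * (r * p) + k * (p * q) : ℕ) then 1 else 0

/-!
Let `S` be the generating series of the additive monoid `⟨pq, rp⟩ ⊆ ℕ`. Writing an element as
`i·pq + j·rp` and trading `q` copies of `rp` for `r` copies of `pq`, one may take `j < q`, and then
the representation is unique because `q` and `r` are coprime. Hence
`S·(1 - z^{pq}) = ∑_{j<q} z^{j·rp}` and `S·(1 - z^{pq})(1 - z^{rp}) = 1 - z^{pqr}`. Dividing the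
defining identity of `Q` by this gives `Q·(1 - z^{qr}) = F·(1 - z^q)(1 - z^r)` with
`F = S·(1 + z + ⋯ + z^{p-1})`. As `S` is supported on multiples of `p`, the coefficients of `F`
lie in `{0, 1}`, so those of `F·(1 - z^q)` lie in `[-1, 1]` and those of `F·(1 - z^q)(1 - z^r)`,
which are the differences `a_m - a_{m-qr}`, lie in `[-2, 2]`. The other two bounds follow by
rotating `(p, q, r)`.
-/

namespace PowerSeries

open Finset

variable {R : Type*} [CommRing R]

theorem coeff_mul_one_sub_X_pow (f : R⟦X⟧) (k n : ℕ) :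
    coeff n (f * (1 - X ^ k)) = coeff n f - if k ≤ n then coeff (n - k) f else 0 := by
  rw [mul_one_sub, map_sub, coeff_mul_X_pow']

theorem one_sub_X_pow_ne_zero [Nontrivial R] {k : ℕ} (hk : k ≠ 0) : (1 : R⟦X⟧) - X ^ k ≠ 0 := by
  intro h
  simpa [zero_pow hk] using congrArg (coeff 0) h

theorem coeff_mk_mul_sum_X_pow_of_dvd {p : ℕ} (hp : 0 < p) {f : ℕ → R}
    (hf : ∀ n, f n ≠ 0 → p ∣ n) (n : ℕ) :
    coeff n (mk f * ∑ t ∈ range p, X ^ t) = f (n - n % p) := by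
  rw [mul_sum, map_sum, sum_eq_single_of_mem (n % p) (mem_range.2 (Nat.mod_lt n hp))]
  · rw [coeff_mul_X_pow', if_pos (Nat.mod_le n p), coeff_mk]
  intro t ht hne
  rw [coeff_mul_X_pow']
  split_ifs with htn
  · rw [coeff_mk]
    by_contra hf'
    -- only the residue `t = n % p` can make `n - t` a multiple of `p`
    have hmod : t % p = n % p := (Nat.modEq_iff_dvd' htn).2 (hf _ hf')
    exact hne (by rwa [Nat.mod_eq_of_lt (mem_range.1 ht)] at hmod)
  · rfl

theorem coeff_sum_range_X_pow_mul {k : ℕ} (hk : 0 < k) (q n : ℕ) :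
    coeff n (∑ j ∈ range q, (X : R⟦X⟧) ^ (j * k)) = if ∃ j < q, n = j * k then 1 else 0 := by
  simp only [map_sum, coeff_X_pow]
  split_ifs with h
  · obtain ⟨j, hj, rfl⟩ := h
    rw [sum_eq_single_of_mem j (mem_range.2 hj) fun i _ hij => if_neg fun h' =>
      hij (Nat.eq_of_mul_eq_mul_right hk h').symm, if_pos rfl]
  · exact sum_eq_zero fun j hj => if_neg fun h' => h ⟨j, mem_range.1 hj, h'⟩

variable [LinearOrder R] [IsStrictOrderedRing R]

theorem abs_coeff_mul_one_sub_X_pow_le {f : R⟦X⟧} {c : R} (hf₀ : ∀ n, 0 ≤ coeff n f)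
    (hf : ∀ n, coeff n f ≤ c) (k n : ℕ) : |coeff n (f * (1 - X ^ k))| ≤ c := by
  rw [coeff_mul_one_sub_X_pow, abs_le]
  split_ifs <;> constructor <;> linarith [hf₀ n, hf n, hf₀ (n - k), hf (n - k)]

theorem abs_coeff_mul_one_sub_X_pow_le_two_mul {f : R⟦X⟧} {c : R} (hf : ∀ n, |coeff n f| ≤ c)
    (k n : ℕ) : |coeff n (f * (1 - X ^ k))| ≤ 2 * c := by
  rw [coeff_mul_one_sub_X_pow]
  split_ifs
  · exact (abs_sub _ _).trans (by linarith [hf n, hf (n - k)])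
  · rw [sub_zero]
    linarith [hf n, abs_nonneg (coeff n f)]

end PowerSeries

section

open PowerSeries Finset

local notation "z" => (PowerSeries.X : ℤ⟦X⟧)

variable {p q r : ℕ}

namespace TernaryInclusionExclusion

theorem mul_ne_add_mul_add (hp : 0 < p) (hqr : q.Coprime r) {j : ℕ} (hj : j < q) (i j' : ℕ) :
    j * (r * p) ≠ i * (p * q) + j' * (r * p) + p * q := by
  intro h
  have h' : j * r = (i + 1) * q + j' * r :=
    Nat.eq_of_mul_eq_mul_left hp (by linear_combination h)
  have hj' : j' < j := by
    by_contra! hle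
    nlinarith [Nat.mul_le_mul_right r hle]
  have hdvd : q ∣ (j - j') * r := ⟨i + 1, by rw [Nat.sub_mul, h', mul_comm q]; omega⟩
  have := Nat.le_of_dvd (by omega) (hqr.dvd_of_dvd_mul_right hdvd)
  omega

theorem mem_closure_pair_iff_sub_mem_or (hr : 0 < r) (n : ℕ) :
    n ∈ AddSubmonoid.closure {p * q, r * p} ↔
      (p * q ≤ n ∧ n - p * q ∈ AddSubmonoid.closure {p * q, r * p}) ∨
        ∃ j < q, n = j * (r * p) := by
  have mem : ∀ i j : ℕ, i * (p * q) + j * (r * p) ∈ AddSubmonoid.closure {p * q, r * p} :=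
    fun i j => (AddSubmonoid.mem_closure_pair _ _ _).2 ⟨i, j, by simp⟩
  have shift : ∀ i j : ℕ, p * q ≤ p * q + (i * (p * q) + j * (r * p)) ∧
      p * q + (i * (p * q) + j * (r * p)) - p * q ∈ AddSubmonoid.closure {p * q, r * p} :=
    fun i j => ⟨Nat.le_add_right _ _, by simpa using mem i j⟩
  constructor
  · rw [AddSubmonoid.mem_closure_pair]
    rintro ⟨i, j, rfl⟩
    simp only [smul_eq_mul]
    rcases i with _ | i
    · by_cases hj : j < q
      · exact Or.inr ⟨j, hj, by ring⟩
      · obtain ⟨j', rfl⟩ := Nat.exists_eq_add_of_le (not_lt.1 hj)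
        obtain ⟨r', rfl⟩ := Nat.exists_eq_succ_of_ne_zero hr.ne'
        rw [show 0 * (p * q) + (q + j') * ((r' + 1) * p) =
          p * q + (r' * (p * q) + j' * ((r' + 1) * p)) by ring]
        exact Or.inl (shift r' j')
    · rw [show (i + 1) * (p * q) + j * (r * p) = p * q + (i * (p * q) + j * (r * p)) by ring]
      exact Or.inl (shift i j)
  · rintro (⟨hle, hmem⟩ | ⟨j, -, rfl⟩)
    · simpa [Nat.add_sub_cancel' hle] using add_mem (mem 1 0) hmem
    · simpa using mem 0 j

theorem sub_notMem_closure_pair (hp : 0 < p) (hqr : q.Coprime r) {j : ℕ} (hj : j < q)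
    (hle : p * q ≤ j * (r * p)) : j * (r * p) - p * q ∉ AddSubmonoid.closure {p * q, r * p} := by
  rw [AddSubmonoid.mem_closure_pair]
  rintro ⟨i, j', h⟩
  simp only [smul_eq_mul] at h
  exact mul_ne_add_mul_add hp hqr hj i j' (by omega)

noncomputable def semigroupSeries (a b : ℕ) : ℤ⟦X⟧ :=
  mk fun n => if n ∈ AddSubmonoid.closure {a, b} then 1 else 0

theorem semigroupSeries_mul_one_sub_X_pow (hp : 0 < p) (hr : 0 < r) (hqr : q.Coprime r) :
    semigroupSeries (p * q) (r * p) * (1 - z ^ (p * q)) =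
      ∑ j ∈ range q, z ^ (j * (r * p)) := by
  ext n
  rw [coeff_mul_one_sub_X_pow, coeff_sum_range_X_pow_mul (by positivity)]
  simp only [semigroupSeries, coeff_mk, ← ite_and]
  rw [if_congr (mem_closure_pair_iff_sub_mem_or hr n) rfl rfl]
  by_cases h : ∃ j < q, n = j * (r * p)
  · have hsub : ¬(p * q ≤ n ∧ n - p * q ∈ AddSubmonoid.closure {p * q, r * p}) := by
      obtain ⟨j, hj, rfl⟩ := h
      exact fun h' => sub_notMem_closure_pair hp hqr hj h'.1 h'.2
    rw [if_pos (Or.inr h), if_neg hsub, if_pos h, sub_zero]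
  · simp [h]

theorem semigroupSeries_mul_one_sub_X_pow_mul_one_sub_X_pow (hp : 0 < p) (hr : 0 < r)
    (hqr : q.Coprime r) :
    semigroupSeries (p * q) (r * p) * (1 - z ^ (p * q)) * (1 - z ^ (r * p)) =
      1 - z ^ (p * q * r) := by
  simp_rw [semigroupSeries_mul_one_sub_X_pow hp hr hqr, pow_mul', geom_sum_mul_neg, ← pow_mul]
  ring_nf

theorem dvd_of_mem_closure_pair {n : ℕ} (hn : n ∈ AddSubmonoid.closure {p * q, r * p}) : p ∣ n := by
  obtain ⟨i, j, rfl⟩ := (AddSubmonoid.mem_closure_pair _ _ _).1 hn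
  exact ⟨i * q + j * r, by simp only [smul_eq_mul]; ring⟩

theorem coeff_semigroupSeries_mul_geom_sum (hp : 0 < p) (n : ℕ) :
    coeff n (semigroupSeries (p * q) (r * p) * ∑ t ∈ range p, z ^ t) =
      if n - n % p ∈ AddSubmonoid.closure {p * q, r * p} then 1 else 0 :=
  coeff_mk_mul_sum_X_pow_of_dvd hp (fun _ hn => dvd_of_mem_closure_pair (ite_ne_right_iff.1 hn).1) n

end TernaryInclusionExclusion

open TernaryInclusionExclusion

theorem aCoeff_sub_aCoeff_sub (Q : ℤ[X]) (k : ℕ) (m : ℤ) :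
    aCoeff Q m - aCoeff Q (m - k) =
      if 0 ≤ m then coeff m.toNat ((Q : ℤ⟦X⟧) * (1 - z ^ k)) else 0 := by
  unfold aCoeff
  rw [coeff_mul_one_sub_X_pow, Polynomial.coeff_coe, Polynomial.coeff_coe]
  split_ifs <;> first | omega | simp only [sub_zero, sub_self] | (congr 2; omega)

theorem ternaryId.rotate {Q : ℤ[X]} (hQ : ternaryId p q r Q) : ternaryId q r p Q := by
  unfold ternaryId at hQ ⊢
  rw [show q * r * p = p * q * r by ring]
  linear_combination hQ

theorem ternaryId.coe_mul_one_sub_X_pow_eq (hp : 0 < p) (hq : 0 < q) (hr : 0 < r)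
    (hqr : q.Coprime r) {Q : ℤ[X]} (hQ : ternaryId p q r Q) :
    (Q : ℤ⟦X⟧) * (1 - z ^ (q * r)) =
      semigroupSeries (p * q) (r * p) * (∑ t ∈ range p, z ^ t) * (1 - z ^ q) * (1 - z ^ r) := by
  have hQ' : (Q : ℤ⟦X⟧) * ((1 - z ^ (q * r)) * (1 - z ^ (r * p)) * (1 - z ^ (p * q)) * (1 - z)) =
      (1 - z ^ (p * q * r)) * (1 - z ^ r) * (1 - z ^ q) * (1 - z ^ p) := by
    have := congrArg (fun P : ℤ[X] => (P : ℤ⟦X⟧)) hQ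
    push_cast at this
    linear_combination this
  have hS := semigroupSeries_mul_one_sub_X_pow_mul_one_sub_X_pow hp hr hqr
  have hG := geom_sum_mul_neg z p
  refine mul_right_cancel₀ (b := (1 - z ^ (r * p)) * (1 - z ^ (p * q)) * (1 - z))
    (mul_ne_zero (mul_ne_zero ?_ ?_) ?_) ?_
  · exact one_sub_X_pow_ne_zero (by positivity)
  · exact one_sub_X_pow_ne_zero (by positivity)
  · simpa using one_sub_X_pow_ne_zero (R := ℤ) one_ne_zero
  linear_combination hQ' - (∑ t ∈ range p, z ^ t) * (1 - z) * (1 - z ^ q) * (1 - z ^ r) * hS -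
    (1 - z ^ (p * q * r)) * (1 - z ^ q) * (1 - z ^ r) * hG

theorem ternaryId.abs_aCoeff_sub_aCoeff_sub_le_two (hp : 0 < p) (hq : 0 < q) (hr : 0 < r)
    (hqr : q.Coprime r) {Q : ℤ[X]} (hQ : ternaryId p q r Q) (m : ℤ) :
    |aCoeff Q m - aCoeff Q (m - q * r)| ≤ 2 := by
  have hF : ∀ n, coeff n (semigroupSeries (p * q) (r * p) * ∑ t ∈ range p, z ^ t) ∈ Set.Icc 0 1 :=
    fun n => by rw [coeff_semigroupSeries_mul_geom_sum hp]; split_ifs <;> simp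
  have hcoeff (n : ℕ) : |coeff n ((Q : ℤ⟦X⟧) * (1 - z ^ (q * r)))| ≤ 2 := by
    rw [hQ.coe_mul_one_sub_X_pow_eq hp hq hr hqr]
    exact (abs_coeff_mul_one_sub_X_pow_le_two_mul
      (abs_coeff_mul_one_sub_X_pow_le (fun n => (hF n).1) (fun n => (hF n).2) q) r n).trans_eq
      (mul_one 2)
  rw [← Nat.cast_mul, aCoeff_sub_aCoeff_sub]
  split_ifs
  · exact hcoeff _
  · norm_num

end

/-- `|a_m - a_{m-qr}| ≤ 2`, and likewise with `qr` replaced by `rp` or `pq`. -/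
theorem stmt_14 (p q r : ℕ) (hp : 3 ≤ p) (hq : 3 ≤ q) (hr : 3 ≤ r)
    (hpq : Nat.Coprime p q) (hqr : Nat.Coprime q r) (hrp : Nat.Coprime r p)
    (Q : Polynomial ℤ) (hQ : ternaryId p q r Q) :
    ∀ m : ℤ, |aCoeff Q m - aCoeff Q (m - (q : ℤ) * r)| ≤ 2 ∧
      |aCoeff Q m - aCoeff Q (m - (r : ℤ) * p)| ≤ 2 ∧
      |aCoeff Q m - aCoeff Q (m - (p : ℤ) * q)| ≤ 2 := by
  intro m
  exact ⟨hQ.abs_aCoeff_sub_aCoeff_sub_le_two (by omega) (by omega) (by omega) hqr m,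
    hQ.rotate.abs_aCoeff_sub_aCoeff_sub_le_two (by omega) (by omega) (by omega) hrp m,
    hQ.rotate.rotate.abs_aCoeff_sub_aCoeff_sub_le_two (by omega) (by omega) (by omega) hpq m⟩
end

section
/- If p < min(q, r), then for every integer m ≥ 0 the coefficients of Q_{p,q,r} satisfy |a_m| ≤ 2⌈m/(qr)⌉ + 1. -/
open Polynomial
open scoped Classical

/-!
Let `W(z) = ∑ z^(i·qr + j·rp + k·pq + l)` over `i, l < p`, `j < q`, `k < r`; it is
`(1 - z^pqr)(1 + z + ⋯ + z^(p-1))` times the Hilbert series of the semigroup `⟨qr, rp, pq⟩`.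
Summing the four geometric series gives
`W·(1 - z^qr)(1 - z^rp)(1 - z^pq)(1 - z) = (1 - z^pqr)³(1 - z^p)`, so the defining identity
becomes `Q·(1 - z^pqr)² = W·(1 - z^q)(1 - z^r)`. Since `deg Q < pqr`, for `m < pqr` this reads
`a_m = w_m - w_(m-q) - w_(m-r) + w_(m-q-r)`, where `w_t ≥ 0` are the coefficients of `W`, and
`a_m = 0` for larger `m`.

Two tuples counted by `w_t` with the same `i` have exponents differing by
`(j - j')rp + (k - k')pq + (l - l')`: divisibility by `p` forces `l = l'`, and then, `q` and `r`
being coprime, `j = j'` and `k = k'`. As `i·qr ≤ t`, this gives `w_t ≤ ⌊t/qr⌋ + 1`, which is at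
most `⌈m/qr⌉` for `t < m` and at most `⌈m/qr⌉ + 1` for `t = m`.
-/

open Finset

lemma one_sub_X_pow_ne_zero {R : Type*} [Ring R] [Nontrivial R] {n : ℕ} (hn : n ≠ 0) :
    (1 - X ^ n : R[X]) ≠ 0 := by
  intro h
  simpa [coeff_X_pow, Ne.symm hn] using congrArg (coeff · 0) h

lemma coeff_sum_X_pow {R ι : Type*} [Semiring R] (s : Finset ι) (e : ι → ℕ) (n : ℕ) :
    (∑ x ∈ s, (X : R[X]) ^ e x).coeff n = #{x ∈ s | e x = n} := by
  simp only [finsetSum_coeff, coeff_X_pow, eq_comm (a := n), ← sum_boole]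

lemma ediv_add_one_le_ceil_div {k : Type*} [Field k] [LinearOrder k] [IsStrictOrderedRing k]
    [FloorRing k] {d t m : ℤ} (hd : 0 < d) (htm : t < m) : t / d + 1 ≤ ⌈(m : k) / d⌉ := by
  rw [Int.add_one_le_iff, Int.lt_ceil, lt_div_iff₀ (by exact_mod_cast hd)]
  exact_mod_cast (Int.ediv_mul_le t hd.ne').trans_lt htm

lemma ediv_le_ceil_div {k : Type*} [Field k] [LinearOrder k] [IsStrictOrderedRing k]
    [FloorRing k] {d : ℤ} (hd : 0 < d) (m : ℤ) : m / d ≤ ⌈(m : k) / d⌉ := by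
  have h : ((m / d : ℤ) : k) ≤ m / d := by
    rw [le_div_iff₀ (by exact_mod_cast hd)]
    exact_mod_cast Int.ediv_mul_le m hd.ne'
  exact_mod_cast h.trans (Int.le_ceil _)

lemma aCoeff_of_neg (f : ℤ[X]) {m : ℤ} (hm : m < 0) : aCoeff f m = 0 :=
  if_neg hm.not_ge

lemma aCoeff_eq_zero_of_natDegree_lt {f : ℤ[X]} {m : ℤ} (hm : (f.natDegree : ℤ) < m) :
    aCoeff f m = 0 := by
  rw [aCoeff, if_pos (by omega)]
  exact coeff_eq_zero_of_natDegree_lt (by omega)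

lemma aCoeff_add (f g : ℤ[X]) (m : ℤ) : aCoeff (f + g) m = aCoeff f m + aCoeff g m := by
  unfold aCoeff
  split_ifs <;> simp

lemma aCoeff_sub (f g : ℤ[X]) (m : ℤ) : aCoeff (f - g) m = aCoeff f m - aCoeff g m := by
  unfold aCoeff
  split_ifs <;> simp

lemma aCoeff_mul_X_pow (f : ℤ[X]) (k : ℕ) (m : ℤ) : aCoeff (f * X ^ k) m = aCoeff f (m - k) := by
  unfold aCoeff
  rw [coeff_mul_X_pow']
  split_ifs <;> first | rfl | omega | exact congrArg f.coeff (by omega)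

def windowBox (p q r : ℕ) : Finset (ℕ × ℕ × ℕ × ℕ) := range p ×ˢ range q ×ˢ range r ×ˢ range p

def windowExp (p q r : ℕ) (x : ℕ × ℕ × ℕ × ℕ) : ℕ :=
  x.1 * (q * r) + (x.2.1 * (r * p) + (x.2.2.1 * (p * q) + x.2.2.2))

noncomputable def windowPoly (p q r : ℕ) : ℤ[X] := ∑ x ∈ windowBox p q r, X ^ windowExp p q r x

lemma windowPoly_eq_prod (p q r : ℕ) :
    windowPoly p q r = (∑ i ∈ range p, (X ^ (q * r)) ^ i) * ((∑ j ∈ range q, (X ^ (r * p)) ^ j) *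
      ((∑ k ∈ range r, (X ^ (p * q)) ^ k) * ∑ l ∈ range p, X ^ l)) := by
  simp only [windowPoly, windowBox, windowExp, sum_product, pow_add, pow_mul', ← mul_sum, ← sum_mul]

lemma windowPoly_mul (p q r : ℕ) :
    windowPoly p q r * ((1 - X ^ (q * r)) * (1 - X ^ (r * p)) * (1 - X ^ (p * q)) * (1 - X)) =
      (1 - X ^ (p * q * r)) ^ 3 * (1 - X ^ p) := by
  rw [windowPoly_eq_prod]
  calc _ = ((1 - X ^ (q * r)) * ∑ i ∈ range p, (X ^ (q * r)) ^ i) *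
        ((1 - X ^ (r * p)) * ∑ j ∈ range q, (X ^ (r * p)) ^ j) *
        ((1 - X ^ (p * q)) * ∑ k ∈ range r, (X ^ (p * q)) ^ k) *
        ((1 - X) * ∑ l ∈ range p, (X : ℤ[X]) ^ l) := by ring
    _ = _ := by
      rw [mul_neg_geom_sum, mul_neg_geom_sum, mul_neg_geom_sum, mul_neg_geom_sum,
        ← pow_mul, ← pow_mul, ← pow_mul]
      ring

lemma injOn_windowExp_tail {p q r : ℕ} (hqr : q.Coprime r) :
    Set.InjOn (fun y : ℕ × ℕ × ℕ => y.1 * (r * p) + (y.2.1 * (p * q) + y.2.2))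
      ↑(range q ×ˢ range r ×ˢ range p) := by
  rintro ⟨j, k, l⟩ h ⟨j', k', l'⟩ h' he
  simp only [coe_product, Set.mem_prod, mem_coe, mem_range] at h h' he
  zify at he
  have hl : l = l' := by
    have hdvd : (p : ℤ) ∣ l - l' := ⟨(j' - j) * r + (k' - k) * q, by linear_combination he⟩
    have := Int.eq_zero_of_abs_lt_dvd hdvd (by rw [abs_lt]; omega)
    omega
  subst hl
  have hj : j = j' := by
    have hp : (p : ℤ) ≠ 0 := by omega
    have hdvd : (q : ℤ) ∣ r * (j - j') :=
      ⟨k' - k, mul_left_cancel₀ hp (by linear_combination he)⟩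
    have := Int.eq_zero_of_abs_lt_dvd
      ((Nat.isCoprime_iff_coprime.mpr hqr).dvd_of_dvd_mul_left hdvd) (by rw [abs_lt]; omega)
    omega
  subst hj
  have hk : (k : ℤ) = k' := by
    have hpq : (p : ℤ) * q ≠ 0 := mul_ne_zero (by omega) (by omega)
    exact mul_right_cancel₀ hpq (by linear_combination he)
  simp_all

lemma card_filter_windowExp_le {p q r : ℕ} (hqr : q.Coprime r) (n : ℕ) :
    #{x ∈ windowBox p q r | windowExp p q r x = n} ≤ n / (q * r) + 1 := by
  calc _ ≤ #(range (n / (q * r) + 1)) := by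
        refine card_le_card_of_injOn Prod.fst ?_ ?_
        · rintro ⟨i, j, k, l⟩ hx
          obtain ⟨hbox, hx⟩ := mem_filter.mp hx
          simp only [windowBox, mem_product, mem_range] at hbox
          rw [mem_coe, mem_range, Nat.lt_succ_iff,
            Nat.le_div_iff_mul_le (Nat.mul_pos (by omega) (by omega)), ← hx]
          exact Nat.le_add_right _ _
        · rintro ⟨i, y⟩ hx ⟨i', y'⟩ hx' (rfl : i = i')
          obtain ⟨hbox, hx⟩ := mem_filter.mp hx
          obtain ⟨hbox', hx'⟩ := mem_filter.mp hx'
          simp only [windowBox, mem_product] at hbox hbox'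
          exact Prod.ext rfl (injOn_windowExp_tail hqr (by simpa [mem_product] using hbox.2)
            (by simpa [mem_product] using hbox'.2) (add_left_cancel (hx.trans hx'.symm)))
    _ = n / (q * r) + 1 := card_range _

lemma aCoeff_windowPoly_nonneg (p q r : ℕ) (t : ℤ) : 0 ≤ aCoeff (windowPoly p q r) t := by
  unfold aCoeff
  split_ifs
  · rw [windowPoly, coeff_sum_X_pow]
    positivity
  · rfl

lemma aCoeff_windowPoly_le {p q r : ℕ} (hqr : q.Coprime r) {t : ℤ} (ht : 0 ≤ t) :
    aCoeff (windowPoly p q r) t ≤ t / (q * r) + 1 := by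
  rw [aCoeff, if_pos ht, windowPoly, coeff_sum_X_pow]
  calc _ ≤ ((t.toNat / (q * r) + 1 : ℕ) : ℤ) := by exact_mod_cast card_filter_windowExp_le hqr _
    _ = t / (q * r) + 1 := by push_cast; rw [Int.toNat_of_nonneg ht]

lemma aCoeff_windowPoly_le_ceil {p q r : ℕ} (hq : 0 < q) (hr : 0 < r) (hqr : q.Coprime r)
    {t m : ℤ} (hm : 0 ≤ m) (htm : t < m) :
    aCoeff (windowPoly p q r) t ≤ ⌈(m : ℚ) / (q * r)⌉ := by
  rcases lt_or_ge t 0 with ht | ht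
  · rw [aCoeff_of_neg _ ht]
    exact Int.ceil_nonneg (by positivity)
  · calc _ ≤ t / (q * r) + 1 := aCoeff_windowPoly_le hqr ht
      _ ≤ ⌈(m : ℚ) / (q * r)⌉ := by
        exact_mod_cast ediv_add_one_le_ceil_div (k := ℚ) (by positivity) htm

lemma aCoeff_windowPoly_le_ceil_add_one {p q r : ℕ} (hq : 0 < q) (hr : 0 < r)
    (hqr : q.Coprime r) {m : ℤ} (hm : 0 ≤ m) :
    aCoeff (windowPoly p q r) m ≤ ⌈(m : ℚ) / (q * r)⌉ + 1 := by
  calc _ ≤ m / (q * r) + 1 := aCoeff_windowPoly_le hqr hm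
    _ ≤ ⌈(m : ℚ) / (q * r)⌉ + 1 := by
      gcongr
      exact_mod_cast ediv_le_ceil_div (k := ℚ) (by positivity) m

lemma ternaryId.mul_one_sub_sq {p q r : ℕ} {Q : ℤ[X]} (hp : 0 < p) (hq : 0 < q) (hr : 0 < r)
    (hQ : ternaryId p q r Q) :
    Q * (1 - X ^ (p * q * r)) ^ 2 = windowPoly p q r * ((1 - X ^ q) * (1 - X ^ r)) := by
  have hD : ((1 - X ^ (q * r)) * (1 - X ^ (r * p)) * (1 - X ^ (p * q)) * (1 - X) : ℤ[X]) ≠ 0 := by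
    have h₁ : (1 - X : ℤ[X]) ≠ 0 := by simpa using one_sub_X_pow_ne_zero (R := ℤ) one_ne_zero
    refine mul_ne_zero (mul_ne_zero (mul_ne_zero ?_ ?_) ?_) h₁ <;>
      exact one_sub_X_pow_ne_zero (by positivity)
  rw [ternaryId] at hQ
  apply mul_right_cancel₀ hD
  linear_combination (1 - X ^ (p * q * r)) ^ 2 * hQ -
    (1 - X ^ q) * (1 - X ^ r) * windowPoly_mul p q r

lemma ternaryId.natDegree_lt {p q r : ℕ} {Q : ℤ[X]} (hp : 0 < p) (hq : 0 < q) (hr : 0 < r)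
    (hQ : ternaryId p q r Q) : Q.natDegree < p * q * r := by
  have ne_zero : ∀ {n : ℕ}, n ≠ 0 → (X ^ n - 1 : ℤ[X]) ≠ 0 := fun hn => by
    simpa using X_pow_sub_C_ne_zero (Nat.pos_of_ne_zero hn) (1 : ℤ)
  have degree : ∀ n : ℕ, (X ^ n - 1 : ℤ[X]).natDegree = n := fun n => by
    simpa using natDegree_X_pow_sub_C (n := n) (r := (1 : ℤ))
  rw [ternaryId, show (X - 1 : ℤ[X]) = X ^ 1 - 1 by rw [pow_one]] at hQ
  have hQ0 : Q ≠ 0 := by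
    rintro rfl
    rw [zero_mul, eq_comm] at hQ
    simp [ne_zero, hp.ne', hq.ne', hr.ne'] at hQ
  have hdeg := congrArg natDegree hQ
  simp only [natDegree_mul, hQ0, ne_zero, degree, mul_ne_zero_iff, hp.ne', hq.ne', hr.ne',
    one_ne_zero, ne_eq, not_false_eq_true, and_self] at hdeg
  have := Nat.le_mul_of_pos_right q hr
  have := Nat.le_mul_of_pos_right r hp
  have := Nat.le_mul_of_pos_right p hq
  omega

lemma ternaryId.aCoeff_eq {p q r : ℕ} {Q : ℤ[X]} (hp : 0 < p) (hq : 0 < q) (hr : 0 < r)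
    (hQ : ternaryId p q r Q) {m : ℤ} (hm : m < p * q * r) :
    aCoeff Q m = aCoeff (windowPoly p q r) m - aCoeff (windowPoly p q r) (m - q) -
      aCoeff (windowPoly p q r) (m - r) + aCoeff (windowPoly p q r) (m - q - r) := by
  have h := congrArg (aCoeff · m) (hQ.mul_one_sub_sq hp hq hr)
  set N := p * q * r
  set W := windowPoly p q r
  have hQ_expand : Q * (1 - X ^ N) ^ 2 = Q - Q * X ^ N - Q * X ^ N + Q * X ^ (N + N) := by ring
  have hW_expand : W * ((1 - X ^ q) * (1 - X ^ r)) =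
      W - W * X ^ q - W * X ^ r + W * X ^ (q + r) := by ring
  have hN : 0 < (N : ℤ) := by positivity
  have hmN : m < (N : ℤ) := by simp only [N]; push_cast; exact hm
  simp only [hQ_expand, hW_expand, aCoeff_add, aCoeff_sub, aCoeff_mul_X_pow,
    aCoeff_of_neg Q (m := m - N) (by omega), aCoeff_of_neg Q (m := m - N - N) (by omega),
    Nat.cast_add, sub_add_eq_sub_sub] at h
  linear_combination h

theorem stmt_16_general (p q r : ℕ) (hp : 3 ≤ p) (hq : 3 ≤ q) (hr : 3 ≤ r)
    (hqr : Nat.Coprime q r)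
    (Q : Polynomial ℤ) (hQ : ternaryId p q r Q) :
    ∀ m : ℤ, 0 ≤ m → |aCoeff Q m| ≤ 2 * ⌈(m : ℚ) / ((q : ℚ) * r)⌉ + 1 := by
  intro m hm
  have hp₀ : 0 < p := by omega
  have hq₀ : 0 < q := by omega
  have hr₀ : 0 < r := by omega
  rcases lt_or_ge m (p * q * r) with hlt | hge
  · have hw := aCoeff_windowPoly_nonneg p q r
    have hw_lt {t : ℤ} (ht : t < m) := aCoeff_windowPoly_le_ceil (p := p) hq₀ hr₀ hqr hm ht
    have hw_m := aCoeff_windowPoly_le_ceil_add_one (p := p) hq₀ hr₀ hqr hm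
    rw [hQ.aCoeff_eq hp₀ hq₀ hr₀ hlt, abs_le]
    constructor <;> linarith [hw m, hw (m - q), hw (m - r), hw (m - q - r),
      hw_lt (t := m - q) (by omega), hw_lt (t := m - r) (by omega),
      hw_lt (t := m - q - r) (by omega)]
  · have hdeg : (Q.natDegree : ℤ) < p * q * r := by exact_mod_cast hQ.natDegree_lt hp₀ hq₀ hr₀
    rw [aCoeff_eq_zero_of_natDegree_lt (hdeg.trans_le hge), abs_zero]
    linarith [Int.ceil_nonneg (show (0 : ℚ) ≤ m / (q * r) by positivity)]

/-- If `p < min(q, r)`, then `|a_m| ≤ 2⌈m/(qr)⌉ + 1` for every `m ≥ 0`. -/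
theorem stmt_16 (p q r : ℕ) (hp : 3 ≤ p) (hq : 3 ≤ q) (hr : 3 ≤ r)
    (hpq : Nat.Coprime p q) (hqr : Nat.Coprime q r) (hrp : Nat.Coprime r p)
    (hpmin : p < min q r)
    (Q : Polynomial ℤ) (hQ : ternaryId p q r Q) :
    ∀ m : ℤ, 0 ≤ m → |aCoeff Q m| ≤ 2 * ⌈(m : ℚ) / ((q : ℚ) * r)⌉ + 1 :=
  stmt_16_general p q r hp hq hr hqr Q hQ
end

section
/- Suppose max(p, q) < r < s, both r and s are coprime to pq, and r ≡ s (mod pq). Then χ_r(kr + j) = χ_s(ks + j) for all integers k and j with 0 ≤ k < pq and |j| < r. Moreover, if |j| < min(r, pq), then also χ_r(kr + j − r) = χ_s(ks + j − r). -/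
open Polynomial
open scoped Classical

section Aux

/-- Witness-transfer lemma over ℤ. -/
lemma key_transfer (pq r₁ r₂ K j₁ j₂ m t : ℤ)
    (hpq : 0 < pq) (hr₁ : 0 < r₁) (hr₂ : 0 < r₂) (ht : 0 ≤ t)
    (hdr : pq ∣ r₂ - r₁) (hdj : pq ∣ j₂ - j₁)
    (hj₁ : j₁ < r₁) (hj₂ : -r₂ < j₂)
    (hcase : j₁ ≤ j₂ ∨ -pq < j₂)
    (heq : K * r₁ + j₁ = m * r₁ + t * pq) :
    ∃ t' : ℤ, 0 ≤ t' ∧ K * r₂ + j₂ = m * r₂ + t' * pq := by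
  obtain ⟨d, hd⟩ := hdr
  obtain ⟨e, he⟩ := hdj
  have htpq : 0 ≤ t * pq := mul_nonneg ht hpq.le
  have hmK : m ≤ K := by
    by_contra h
    push_neg at h
    have h1 : (1 : ℤ) ≤ m - K := by linarith
    nlinarith [mul_le_mul_of_nonneg_right h1 hr₁.le]
  refine ⟨t + (K - m) * d + e, ?_, by linear_combination heq + (K - m) * hd + he⟩
  have ht'pq : (t + (K - m) * d + e) * pq = (K - m) * r₂ + j₂ := by
    linear_combination -heq - (K - m) * hd - he
  rcases lt_or_eq_of_le hmK with hlt | heqm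
  · have h1 : (1 : ℤ) ≤ K - m := by linarith
    have hpos : 0 < (t + (K - m) * d + e) * pq := by
      nlinarith [mul_le_mul_of_nonneg_right h1 hr₂.le]
    by_contra h
    push_neg at h
    have h2 : t + (K - m) * d + e ≤ -1 := by linarith
    nlinarith
  · subst heqm
    have hj₁t : j₁ = t * pq := by nlinarith [heq]
    have ht'j : (t + (m - m) * d + e) * pq = j₂ := by
      have h0 : (m - m) * r₂ = 0 := by ring
      nlinarith [ht'pq]
    rcases hcase with hc | hc
    · by_contra h
      push_neg at h
      have h2 : t + (m - m) * d + e ≤ -1 := by linarith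
      nlinarith
    · by_contra h
      push_neg at h
      have h2 : t + (m - m) * d + e ≤ -1 := by linarith
      nlinarith

/-- Reformulation of the representability condition. -/
lemma cond_iff (p q r : ℕ) (n : ℤ) :
    (∃ i a b : ℕ, n = ((i * (q * r) + a * (r * p) + b * (p * q) : ℕ) : ℤ)) ↔
    (∃ m t : ℤ, 0 ≤ t ∧ (∃ i a : ℕ, m = (i : ℤ) * q + (a : ℤ) * p) ∧
      n = m * r + t * ((p : ℤ) * q)) := by
  constructor
  · rintro ⟨i, a, b, h⟩
    refine ⟨(i : ℤ) * q + (a : ℤ) * p, (b : ℤ), by positivity, ⟨i, a, rfl⟩, ?_⟩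
    push_cast at h
    linarith [h]
  · rintro ⟨m, t, ht, ⟨i, a, hm⟩, hn⟩
    refine ⟨i, a, t.toNat, ?_⟩
    push_cast [Int.toNat_of_nonneg ht]
    rw [hn, hm]; ring

lemma chi_eq_chi {p q r s : ℕ} {n n' : ℤ}
    (h : (∃ i a b : ℕ, n = ((i * (q * r) + a * (r * p) + b * (p * q) : ℕ) : ℤ)) ↔
      (∃ i a b : ℕ, n' = ((i * (q * s) + a * (s * p) + b * (p * q) : ℕ) : ℤ))) :
    chi p q r n = chi p q s n' := by
  unfold chi
  exact if_congr h rfl rfl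

lemma chi_neg (p q r : ℕ) (n : ℤ) (hn : n < 0) : chi p q r n = 0 := by
  unfold chi
  rw [if_neg]
  rintro ⟨i, a, b, h⟩
  have h2 : (0 : ℤ) ≤ ((i * (q * r) + a * (r * p) + b * (p * q) : ℕ) : ℤ) :=
    Int.natCast_nonneg _
  omega

end Aux

/-- If `max(p,q) < r < s` and `r ≡ s (mod pq)`, then `χ_r(kr + j) = χ_s(ks + j)`
for all `0 ≤ k < pq` and `|j| < r`; moreover, if `|j| < min(r, pq)` then also
`χ_r(kr + j - r) = χ_s(ks + j - r)`. -/
theorem stmt_18 (p q : ℕ) (hp : 3 ≤ p) (hq : 3 ≤ q) (hpq : Nat.Coprime p q)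
    (r s : ℕ) (hr3 : 3 ≤ r) (hs3 : 3 ≤ s)
    (hrc : Nat.Coprime r (p * q)) (hsc : Nat.Coprime s (p * q))
    (hrmax : max p q < r) (hrs : r < s) (hmod : r ≡ s [MOD p * q])
    (k j : ℤ) (hk0 : 0 ≤ k) (hk : k < ((p * q : ℕ) : ℤ)) :
    (|j| < (r : ℤ) → chi p q r (k * r + j) = chi p q s (k * s + j)) ∧
    (|j| < min (r : ℤ) ((p : ℤ) * q) →
      chi p q r (k * r + j - r) = chi p q s (k * s + j - r)) := by
  have hp0 : (0 : ℤ) < (p : ℤ) * q := by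
    have : (0 : ℕ) < p * q := by positivity
    exact_mod_cast this
  have hr0 : (0 : ℤ) < (r : ℤ) := by exact_mod_cast (by omega : 0 < r)
  have hs0 : (0 : ℤ) < (s : ℤ) := by exact_mod_cast (by omega : 0 < s)
  have hrs' : (r : ℤ) < (s : ℤ) := by exact_mod_cast hrs
  have hdsr : ((p : ℤ) * q) ∣ (s : ℤ) - (r : ℤ) := by
    have := hmod.dvd
    push_cast at this
    convert this using 2 <;> push_cast <;> ring
  have hdrs : ((p : ℤ) * q) ∣ (r : ℤ) - (s : ℤ) := by
    obtain ⟨d, hd⟩ := hdsr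
    exact ⟨-d, by linarith⟩
  constructor
  · intro hj
    obtain ⟨hjgt, hjlt⟩ := abs_lt.mp hj
    apply chi_eq_chi
    rw [cond_iff, cond_iff]
    constructor
    · rintro ⟨m, t, ht, hmS, hn⟩
      obtain ⟨t', ht', heq'⟩ := key_transfer ((p : ℤ) * q) r s k j j m t hp0 hr0 hs0 ht
        hdsr (by simp) hjlt (by linarith) (Or.inl le_rfl) hn
      exact ⟨m, t', ht', hmS, heq'⟩
    · rintro ⟨m, t, ht, hmS, hn⟩
      obtain ⟨t', ht', heq'⟩ := key_transfer ((p : ℤ) * q) s r k j j m t hp0 hs0 hr0 ht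
        hdrs (by simp) (by linarith) hjgt (Or.inl le_rfl) hn
      exact ⟨m, t', ht', hmS, heq'⟩
  · intro hj
    rw [lt_min_iff] at hj
    obtain ⟨hj1, hj2⟩ := hj
    obtain ⟨hjgt, hjlt⟩ := abs_lt.mp hj1
    obtain ⟨hjgt2, hjlt2⟩ := abs_lt.mp hj2
    rcases hk0.eq_or_lt with hk0' | hk0'
    · have e1 : k * (r : ℤ) + j - r = j - r := by rw [← hk0']; ring
      have e2 : k * (s : ℤ) + j - r = j - r := by rw [← hk0']; ring
      rw [e1, e2, chi_neg p q r _ (by linarith), chi_neg p q s _ (by linarith)]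
    · have hk1 : (1 : ℤ) ≤ k := hk0'
      have e1 : k * (r : ℤ) + j - r = (k - 1) * r + j := by ring
      have e2 : k * (s : ℤ) + j - r = (k - 1) * s + (j + ((s : ℤ) - r)) := by ring
      rw [e1, e2]
      apply chi_eq_chi
      rw [cond_iff, cond_iff]
      constructor
      · rintro ⟨m, t, ht, hmS, hn⟩
        obtain ⟨t', ht', heq'⟩ := key_transfer ((p : ℤ) * q) r s (k - 1) j
          (j + ((s : ℤ) - r)) m t hp0 hr0 hs0 ht hdsr (by simpa using hdsr)
          hjlt (by linarith) (Or.inl (by linarith)) hn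
        exact ⟨m, t', ht', hmS, heq'⟩
      · rintro ⟨m, t, ht, hmS, hn⟩
        obtain ⟨t', ht', heq'⟩ := key_transfer ((p : ℤ) * q) s r (k - 1)
          (j + ((s : ℤ) - r)) j m t hp0 hs0 hr0 ht hdrs
          (by simpa using hdrs) (by linarith) hjgt (Or.inr (by linarith)) hn
        exact ⟨m, t', ht', hmS, heq'⟩
end
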